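/- arXiv:1507.01637 — 2 statements merged into one kernel-verified Lean document; each statement's English description precedes it below -/
import Mathlib

section
/- Let k ≥ 1 and let τ be a balanced binary hierarchy over a finite index set J with |J| = 2^k, i.e., a binary hierarchy in which the two children of every nonsingleton cluster have equal cardinality. Then the number F of partitions of J compatible with τ satisfies (√2)^(2^k) ≤ F ≤ (4/5)·(√(5/2))^(2^k). (Equivalently, the sequence defined by F(1) = 2 and F(k+1) = 1 + F(k)², which counts these partitions, satisfies these bounds for all k ≥ 1.) -/
open Finset

/-- A binary hierarchy over a finite index set `J`, encoded by its cluster set: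
a laminar family of nonempty subsets of `J` containing the root `J` and all
singletons, in which every nonsingleton member is the disjoint union of exactly
two members (its children). -/
structure BinaryHierarchy (J : Type*) [DecidableEq J] [Fintype J] where
  clusters : Finset (Finset J)
  root_mem : (Finset.univ : Finset J) ∈ clusters
  singleton_mem : ∀ j : J, ({j} : Finset J) ∈ clusters
  nonempty_of_mem : ∀ I ∈ clusters, I.Nonempty
  laminar : ∀ I ∈ clusters, ∀ K ∈ clusters, I ⊆ K ∨ K ⊆ I ∨ Disjoint I K
  binary_split : ∀ I ∈ clusters, 1 < I.card →
    ∃ L ∈ clusters, ∃ R ∈ clusters, Disjoint L R ∧ L ∪ R = I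

variable {J : Type*} [DecidableEq J] [Fintype J]

/-- The parent of a cluster `I`: the smallest member of the (laminar) family strictly
containing `I`, realized as the intersection of all members strictly containing `I`
(these form a chain in a laminar family). -/
def BinaryHierarchy.parent (τ : BinaryHierarchy J) (I : Finset J) : Finset J :=
  (τ.clusters.filter fun K => I ⊂ K).inf id

/-- The sibling (local complement) of a cluster `I`. -/
def BinaryHierarchy.sibling (τ : BinaryHierarchy J) (I : Finset J) : Finset J :=
  τ.parent I \ I

/-- `P` is a partition of the finite set `K`: its blocks are nonempty, pairwise
disjoint, and their union is `K`. -/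
def IsPartitionOf (P : Finset (Finset J)) (K : Finset J) : Prop :=
  (∀ B ∈ P, B.Nonempty) ∧
  (∀ B ∈ P, ∀ B' ∈ P, B ≠ B' → Disjoint B B') ∧
  P.sup id = K

/-!
Splitting a cluster `I` into its children `L` and `R`, a compatible partition of `I` is either
`{I}` itself or the union of a compatible partition of `L` and one of `R`. Hence the number
`F` of compatible partitions satisfies `F(I) = 1 + F(L) F(R)`, which for a balanced hierarchy
is the recursion `F(k + 1) = 1 + F(k)²` with `F(0) = 1`. Both bounds then follow by induction
from `F(1) = 2`: squaring preserves `(√2)^(2^k) ≤ F(k)`, and `1 + (16/25) x² ≤ (4/5) x²` as soon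
as `x = (√(5/2))^(2^k) ≥ 5/2`.
-/

def balancedPartitionCount : ℕ → ℕ
  | 0 => 1
  | n + 1 => 1 + balancedPartitionCount n ^ 2

theorem sqrt_two_pow_le_balancedPartitionCount {k : ℕ} (hk : 1 ≤ k) :
    √2 ^ 2 ^ k ≤ (balancedPartitionCount k : ℝ) := by
  induction k, hk using Nat.le_induction with
  | base => norm_num [balancedPartitionCount]
  | succ n _ ih =>
    calc √2 ^ 2 ^ (n + 1) = (√2 ^ 2 ^ n) ^ 2 := by rw [pow_succ, pow_mul]
      _ ≤ (balancedPartitionCount n : ℝ) ^ 2 := by gcongr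
      _ ≤ balancedPartitionCount (n + 1) := by
        simp only [balancedPartitionCount]
        push_cast
        linarith

theorem balancedPartitionCount_le {k : ℕ} (hk : 1 ≤ k) :
    (balancedPartitionCount k : ℝ) ≤ 4 / 5 * √(5 / 2) ^ 2 ^ k := by
  induction k, hk using Nat.le_induction with
  | base =>
    rw [pow_one, Real.sq_sqrt (by norm_num)]
    norm_num [balancedPartitionCount]
  | succ n hn ih =>
    have hx : 5 / 2 ≤ √(5 / 2) ^ 2 ^ n :=
      calc (5 / 2 : ℝ) = √(5 / 2) ^ 2 ^ 1 := by rw [pow_one, Real.sq_sqrt (by norm_num)]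
        _ ≤ √(5 / 2) ^ 2 ^ n := pow_le_pow_right₀ (Real.one_le_sqrt.mpr (by norm_num))
          (Nat.pow_le_pow_right two_pos hn)
    have hsq : (balancedPartitionCount n : ℝ) ^ 2 ≤ (4 / 5 * √(5 / 2) ^ 2 ^ n) ^ 2 := by gcongr
    simp only [balancedPartitionCount, pow_succ 2 n, pow_mul]
    push_cast
    nlinarith

namespace IsPartitionOf

variable {α : Type*} [DecidableEq α] {P Q : Finset (Finset α)} {K L R B : Finset α}

theorem subset_of_mem (hP : IsPartitionOf P K) (hB : B ∈ P) : B ⊆ K :=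
  hP.2.2 ▸ le_sup (f := id) hB

theorem exists_mem_of_mem (hP : IsPartitionOf P K) {x : α} (hx : x ∈ K) : ∃ B ∈ P, x ∈ B := by
  rw [← hP.2.2] at hx
  simpa using hx

theorem eq_singleton_of_mem (hP : IsPartitionOf P K) (hK : K ∈ P) : P = {K} := by
  refine eq_singleton_iff_unique_mem.mpr ⟨hK, fun B hB => ?_⟩
  by_contra hne
  obtain ⟨x, hx⟩ := hP.1 B hB
  exact disjoint_left.mp (hP.2.1 B hB K hK hne) hx (hP.subset_of_mem hB hx)

theorem mem_of_card_eq_one (hP : IsPartitionOf P K) (hK : K.card = 1) : K ∈ P := by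
  obtain ⟨x, rfl⟩ := card_eq_one.mp hK
  obtain ⟨B, hB, hxB⟩ := hP.exists_mem_of_mem (mem_singleton_self x)
  have hBx : B = {x} := eq_singleton_iff_unique_mem.mpr
    ⟨hxB, fun y hy => mem_singleton.mp (hP.subset_of_mem hB hy)⟩
  exact hBx ▸ hB

theorem union (hP : IsPartitionOf P L) (hQ : IsPartitionOf Q R) (hLR : Disjoint L R) :
    IsPartitionOf (P ∪ Q) (L ∪ R) := by
  refine ⟨fun B hB => ?_, fun B hB B' hB' hne => ?_, by rw [sup_union, hP.2.2, hQ.2.2]; rfl⟩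
  · rcases mem_union.mp hB with h | h
    exacts [hP.1 B h, hQ.1 B h]
  · rcases mem_union.mp hB with h | h <;> rcases mem_union.mp hB' with h' | h'
    · exact hP.2.1 B h B' h' hne
    · exact hLR.mono (hP.subset_of_mem h) (hQ.subset_of_mem h')
    · exact (hLR.mono (hP.subset_of_mem h') (hQ.subset_of_mem h)).symm
    · exact hQ.2.1 B h B' h' hne

theorem union_not_mem_union (hP : IsPartitionOf P L) (hQ : IsPartitionOf Q R)
    (hLR : Disjoint L R) (hL : L.Nonempty) (hR : R.Nonempty) : L ∪ R ∉ P ∪ Q := by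
  intro h
  rcases mem_union.mp h with h | h
  · obtain ⟨x, hx⟩ := hR
    exact disjoint_left.mp hLR (hP.subset_of_mem h (mem_union_right L hx)) hx
  · obtain ⟨x, hx⟩ := hL
    exact disjoint_left.mp hLR hx (hQ.subset_of_mem h (mem_union_left R hx))

theorem filter_subset_left (hP : IsPartitionOf P (L ∪ R)) (hLR : Disjoint L R)
    (hsplit : ∀ B ∈ P, B ⊆ L ∨ B ⊆ R) : IsPartitionOf (P.filter (· ⊆ L)) L := by
  refine ⟨fun B hB => hP.1 B (mem_filter.mp hB).1,
    fun B hB B' hB' => hP.2.1 B (mem_filter.mp hB).1 B' (mem_filter.mp hB').1,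
    le_antisymm (Finset.sup_le fun B hB => (mem_filter.mp hB).2) fun x hx => ?_⟩
  obtain ⟨B, hB, hxB⟩ := hP.exists_mem_of_mem (mem_union_left R hx)
  have hBL : B ⊆ L := (hsplit B hB).resolve_right fun hBR =>
    disjoint_left.mp hLR hx (hBR hxB)
  exact mem_sup.mpr ⟨B, mem_filter.mpr ⟨hB, hBL⟩, hxB⟩

theorem filter_union_subset_left (hP : IsPartitionOf P L) (hQ : IsPartitionOf Q R)
    (hLR : Disjoint L R) : (P ∪ Q).filter (· ⊆ L) = P := by
  rw [filter_union, filter_true_of_mem fun B => hP.subset_of_mem,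
    filter_false_of_mem fun B hB hBL => ?_, union_empty]
  obtain ⟨x, hx⟩ := hQ.1 B hB
  exact disjoint_left.mp hLR (hBL hx) (hQ.subset_of_mem hB hx)

end IsPartitionOf

theorem isPartitionOf_singleton {α : Type*} [DecidableEq α] {K : Finset α} (hK : K.Nonempty) :
    IsPartitionOf ({K} : Finset (Finset α)) K :=
  ⟨by simpa using hK, by simp, by simp⟩

namespace BinaryHierarchy

def IsCompatiblePartition (τ : BinaryHierarchy J) (K : Finset J) (P : Finset (Finset J)) :
    Prop :=
  IsPartitionOf P K ∧ ∀ B ∈ P, B ∈ τ.clusters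

def IsBalanced (τ : BinaryHierarchy J) : Prop :=
  ∀ I ∈ τ.clusters, 1 < I.card →
    ∃ L ∈ τ.clusters, ∃ R ∈ τ.clusters, Disjoint L R ∧ L ∪ R = I ∧ L.card = R.card

variable {τ : BinaryHierarchy J} {I L R B : Finset J}

theorem subset_or_subset_of_ssubset_union (hB : B ∈ τ.clusters) (hL : L ∈ τ.clusters)
    (hR : R ∈ τ.clusters) (hBLR : B ⊂ L ∪ R) : B ⊆ L ∨ B ⊆ R := by
  rcases τ.laminar B hB L hL with hBL | hLB | hBL
  · exact .inl hBL
  rcases τ.laminar B hB R hR with hBR | hRB | hBR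
  · exact .inr hBR
  · exact absurd (union_subset hLB hRB) (not_subset_of_ssubset hBLR)
  · exact .inl (hBR.left_le_of_le_sup_right hBLR.subset)
  · exact .inr (hBL.left_le_of_le_sup_left hBLR.subset)

theorem isCompatiblePartition_singleton (hI : I ∈ τ.clusters) :
    τ.IsCompatiblePartition I {I} :=
  ⟨isPartitionOf_singleton (τ.nonempty_of_mem I hI), by simpa using hI⟩

theorem card_isCompatiblePartition_of_card_eq_one (hI : I ∈ τ.clusters) (hcard : I.card = 1) :
    Nat.card {P // τ.IsCompatiblePartition I P} = 1 := by
  have : Unique {P // τ.IsCompatiblePartition I P} :=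
    { default := ⟨{I}, isCompatiblePartition_singleton hI⟩
      uniq := fun P => Subtype.ext (P.2.1.eq_singleton_of_mem (P.2.1.mem_of_card_eq_one hcard)) }
  exact Nat.card_unique

def splitEquiv (hL : L ∈ τ.clusters) (hR : R ∈ τ.clusters) (hLR : Disjoint L R) :
    {P : {P // τ.IsCompatiblePartition (L ∪ R) P} // L ∪ R ∉ P.1} ≃
      {P // τ.IsCompatiblePartition L P} × {P // τ.IsCompatiblePartition R P} :=
  have hsplit (P : {P : {P // τ.IsCompatiblePartition (L ∪ R) P} // L ∪ R ∉ P.1}) :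
      ∀ B ∈ P.1.1, B ⊆ L ∨ B ⊆ R := fun B hB =>
    subset_or_subset_of_ssubset_union (P.1.2.2 B hB) hL hR <|
      ssubset_of_subset_of_ne (P.1.2.1.subset_of_mem hB) fun h => P.2 (h ▸ hB)
  { toFun := fun P =>
      (⟨P.1.1.filter (· ⊆ L), P.1.2.1.filter_subset_left hLR (hsplit P),
          fun B hB => P.1.2.2 B (mem_filter.mp hB).1⟩,
        ⟨P.1.1.filter (· ⊆ R),
          (union_comm L R ▸ P.1.2.1 : IsPartitionOf P.1.1 (R ∪ L)).filter_subset_left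
            hLR.symm fun B hB => (hsplit P B hB).symm,
          fun B hB => P.1.2.2 B (mem_filter.mp hB).1⟩)
    invFun := fun Q =>
      ⟨⟨Q.1.1 ∪ Q.2.1, Q.1.2.1.union Q.2.2.1 hLR, fun B hB => (mem_union.mp hB).elim
          (Q.1.2.2 B) (Q.2.2.2 B)⟩,
        Q.1.2.1.union_not_mem_union Q.2.2.1 hLR (τ.nonempty_of_mem L hL) (τ.nonempty_of_mem R hR)⟩
    left_inv := fun P => by
      ext1; ext1
      exact (filter_or _ _ _).symm.trans (filter_true_of_mem (hsplit P))
    right_inv := fun Q => by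
      ext1 <;> ext1
      · exact Q.1.2.1.filter_union_subset_left Q.2.2.1 hLR
      · change (Q.1.1 ∪ Q.2.1).filter (· ⊆ R) = Q.2.1
        rw [union_comm]
        exact Q.2.2.1.filter_union_subset_left Q.1.2.1 hLR.symm }

theorem card_isCompatiblePartition_union (hI : L ∪ R ∈ τ.clusters) (hL : L ∈ τ.clusters)
    (hR : R ∈ τ.clusters) (hLR : Disjoint L R) :
    Nat.card {P // τ.IsCompatiblePartition (L ∪ R) P} =
      1 + Nat.card {P // τ.IsCompatiblePartition L P} *
        Nat.card {P // τ.IsCompatiblePartition R P} := by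
  have hsingleton : Nat.card {P : {P // τ.IsCompatiblePartition (L ∪ R) P} // L ∪ R ∈ P.1} = 1 :=
    Nat.card_eq_one_iff_unique.mpr
      ⟨⟨fun P Q => Subtype.ext <| Subtype.ext <|
          (P.1.2.1.eq_singleton_of_mem P.2).trans (Q.1.2.1.eq_singleton_of_mem Q.2).symm⟩,
        ⟨⟨⟨{L ∪ R}, isCompatiblePartition_singleton hI⟩, mem_singleton_self _⟩⟩⟩
  rw [← Nat.card_congr (Equiv.sumCompl fun P => L ∪ R ∈ P.1), Nat.card_sum, hsingleton,
    Nat.card_congr (splitEquiv hL hR hLR), Nat.card_prod]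

theorem card_isCompatiblePartition_of_isBalanced (hτ : τ.IsBalanced)
    {m : ℕ} (hI : I ∈ τ.clusters) (hcard : I.card = 2 ^ m) :
    Nat.card {P // τ.IsCompatiblePartition I P} = balancedPartitionCount m := by
  induction m generalizing I with
  | zero => exact card_isCompatiblePartition_of_card_eq_one hI hcard
  | succ n ih =>
    obtain ⟨L, hL, R, hR, hLR, rfl, hLRcard⟩ :=
      hτ _ hI (hcard ▸ Nat.one_lt_two_pow (Nat.succ_ne_zero n))
    have hhalf : L.card = 2 ^ n ∧ R.card = 2 ^ n := by
      rw [card_union_of_disjoint hLR, pow_succ] at hcard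
      omega
    rw [card_isCompatiblePartition_union hI hL hR hLR, ih hL hhalf.1, ih hR hhalf.2,
      balancedPartitionCount, sq]

end BinaryHierarchy

/-- for a balanced binary hierarchy over `2^k` leaves (`k ≥ 1`), the
number `F` of compatible partitions satisfies
`(√2)^(2^k) ≤ F ≤ (4/5)·(√(5/2))^(2^k)`. -/
theorem balanced_partition_count_bounds (k : ℕ) (hk : 1 ≤ k)
    (τ : BinaryHierarchy J) (hJ : Fintype.card J = 2 ^ k)
    (hbal : ∀ I ∈ τ.clusters, 1 < I.card →
      ∃ L ∈ τ.clusters, ∃ R ∈ τ.clusters,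
        Disjoint L R ∧ L ∪ R = I ∧ L.card = R.card) :
    Real.sqrt 2 ^ (2 ^ k) ≤
      (Nat.card {P : Finset (Finset J) //
          IsPartitionOf P (Finset.univ : Finset J) ∧ ∀ B ∈ P, B ∈ τ.clusters} : ℝ) ∧
    (Nat.card {P : Finset (Finset J) //
        IsPartitionOf P (Finset.univ : Finset J) ∧ ∀ B ∈ P, B ∈ τ.clusters} : ℝ) ≤
      (4 / 5) * Real.sqrt (5 / 2) ^ (2 ^ k) := by
  have hcount : Nat.card {P // τ.IsCompatiblePartition univ P} = balancedPartitionCount k :=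
    BinaryHierarchy.card_isCompatiblePartition_of_isBalanced hbal τ.root_mem
      (by rw [card_univ, hJ])
  exact hcount ▸ ⟨sqrt_two_pow_le_balancedPartitionCount hk, balancedPartitionCount_le hk⟩
end

section
/- Let J be a finite index set with |J| = n ≥ 2. Then for any two binary hierarchies σ and τ over J, there exists a sequence of binary hierarchies σ = σ₀, σ₁, …, σ_m = τ with each consecutive pair σ_i, σ_{i+1} NNI-adjacent and m ≤ (n − 1)(n − 2)/2. In particular, the NNI-graph on binary hierarchies over J is connected. -/
open Finset

variable {J : Type*} [DecidableEq J] [Fintype J]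

/-- A nearest neighbor interchange move from `τ` to `τ'`: there is a cluster `A ∈ C(τ)`
whose parent `P = Pr(A,τ)` is not the root, with `B := P \ A` and `C := Pr(P,τ) \ P`,
such that `C(τ') = (C(τ) \ {A ∪ B}) ∪ {B ∪ C}`. -/
def NNIMove (τ τ' : BinaryHierarchy J) : Prop :=
  ∃ A ∈ τ.clusters, τ.parent A ≠ Finset.univ ∧
    τ'.clusters =
      (τ.clusters \ {A ∪ (τ.parent A \ A)}) ∪
        {(τ.parent A \ A) ∪ (τ.parent (τ.parent A) \ τ.parent A)}

/-- Two binary hierarchies are NNI-adjacent if one is obtained from the other by a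
single nearest neighbor interchange. -/
def NNIAdjacent (τ τ' : BinaryHierarchy J) : Prop := NNIMove τ τ' ∨ NNIMove τ' τ

/-!
Keep a partition of `J` into clusters of `τ` inside each of which `σ` and `τ` have the same
clusters; initially the singletons. If there are `k ≥ 2` parts, two of them, `B` and `W`, are the
children of a cluster of `τ`. In `σ`, let `Q` be the least cluster containing `B ∪ W`; unless
`B ∪ W = Q`, an interchange inside the child of `Q` that strictly contains `B` (say) creates a
cluster strictly inside `Q` that contains `B ∪ W` and has fewer parts below it, and changes
nothing inside the parts. So at most `k - 2` interchanges make `B ∪ W` a cluster of `σ`, after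
which `B` and `W` are merged into one part. Summing `k - 2` for `k = n, …, 2` gives
`(n - 1)(n - 2) / 2`.
-/

namespace Finpartition

lemma not_le_of_lt {α : Type*} [Lattice α] [OrderBot α] {a b c x : α} {P : Finpartition a}
    (hb : b ∈ P.parts) (hc : c ∈ P.parts) (hbx : b < x) : ¬x ≤ c := fun hxc =>
  (hbx.trans_le hxc).ne (P.disjoint.eq_of_le hb hc (P.ne_bot hb) (hbx.le.trans hxc))

variable {α : Type*} [DistribLattice α] [OrderBot α] [DecidableEq α] {a b c : α}
  (P : Finpartition a)

def mergeParts (hb : b ∈ P.parts) (hc : c ∈ P.parts) (hbc : b ≠ c) : Finpartition a where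
  parts := insert (b ⊔ c) ((P.parts.erase b).erase c)
  supIndep := by
    rw [Finset.supIndep_iff_pairwiseDisjoint, coe_insert]
    refine (P.disjoint.subset ?_).insert fun d hd _ => ?_
    · exact coe_subset.mpr ((erase_subset _ _).trans (erase_subset _ _))
    · obtain ⟨hdc, hdb, hd⟩ := by simpa only [mem_coe, mem_erase] using hd
      exact disjoint_sup_left.mpr ⟨P.disjoint hb hd hdb.symm, P.disjoint hc hd hdc.symm⟩
  sup_parts := by
    have hP : P.parts = insert b (insert c ((P.parts.erase b).erase c)) := by
      rw [insert_erase (mem_erase.mpr ⟨hbc.symm, hc⟩), insert_erase hb]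
    calc (insert (b ⊔ c) ((P.parts.erase b).erase c)).sup id
        = (insert b (insert c ((P.parts.erase b).erase c))).sup id := by
          simp only [sup_insert, id, sup_assoc]
      _ = a := hP ▸ P.sup_parts
  bot_notMem := by
    simp only [mem_insert, mem_erase, not_or, not_and]
    exact ⟨fun h => P.ne_bot hb (eq_bot_mono le_sup_left h.symm), fun _ _ => P.bot_notMem⟩

lemma mergeParts_parts_subset (hb : b ∈ P.parts) (hc : c ∈ P.parts) (hbc : b ≠ c) :
    (P.mergeParts hb hc hbc).parts ⊆ insert (b ⊔ c) P.parts :=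
  insert_subset_insert _ ((erase_subset _ _).trans (erase_subset _ _))

lemma card_mergeParts (hb : b ∈ P.parts) (hc : c ∈ P.parts) (hbc : b ≠ c) :
    #(P.mergeParts hb hc hbc).parts = #P.parts - 1 := by
  have hsup : b ⊔ c ∉ (P.parts.erase b).erase c := by
    simp only [mem_erase]
    rintro ⟨-, hne, hmem⟩
    exact P.ne_bot hb ((P.disjoint hb hmem hne.symm).eq_bot_of_le le_sup_left)
  have hc' : c ∈ P.parts.erase b := mem_erase.mpr ⟨hbc.symm, hc⟩
  rw [mergeParts, card_insert_of_notMem hsup, card_erase_of_mem hc', card_erase_of_mem hb]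
  have := one_lt_card.mpr ⟨b, hb, c, hc, hbc⟩
  omega

end Finpartition

variable (J) in
def nniGraph : SimpleGraph (BinaryHierarchy J) := SimpleGraph.fromRel NNIMove

namespace BinaryHierarchy

lemma clusters_injective : Function.Injective (clusters : BinaryHierarchy J → _) := by
  rintro ⟨⟩ ⟨⟩ rfl
  rfl

variable (τ : BinaryHierarchy J)

lemma subset_or_subset_of_not_disjoint {K K' : Finset J} (hK : K ∈ τ.clusters)
    (hK' : K' ∈ τ.clusters) (h : ¬Disjoint K K') : K ⊆ K' ∨ K' ⊆ K :=
  (τ.laminar K hK K' hK').imp_right (Or.resolve_right · h)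

structure Children (I L R : Finset J) : Prop where
  mem : I ∈ τ.clusters
  left_mem : L ∈ τ.clusters
  right_mem : R ∈ τ.clusters
  disjoint : Disjoint L R
  union_eq : L ∪ R = I

variable {τ}

namespace Children

variable {I L R : Finset J} (h : τ.Children I L R)
include h

lemma symm : τ.Children I R L :=
  ⟨h.mem, h.right_mem, h.left_mem, h.disjoint.symm, union_comm L R ▸ h.union_eq⟩

lemma left_nonempty : L.Nonempty := τ.nonempty_of_mem L h.left_mem

lemma right_nonempty : R.Nonempty := τ.nonempty_of_mem R h.right_mem

lemma left_subset : L ⊆ I := h.union_eq ▸ subset_union_left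

lemma right_subset : R ⊆ I := h.union_eq ▸ subset_union_right

lemma not_subset_left_of_right : ¬R ⊆ L := fun hRL =>
  h.right_nonempty.ne_empty (h.disjoint.symm.eq_bot_of_le hRL)

lemma left_ssubset : L ⊂ I :=
  h.left_subset.ssubset_of_not_subset fun hIL =>
    h.not_subset_left_of_right (h.right_subset.trans hIL)

lemma sdiff_left : I \ L = R := by
  rw [← h.union_eq, union_sdiff_cancel_left h.disjoint]

lemma subset_or_subset_or_eq {K : Finset J} (hK : K ∈ τ.clusters) (hKI : K ⊆ I) :
    K ⊆ L ∨ K ⊆ R ∨ K = I := by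
  rw [← h.union_eq] at hKI ⊢
  by_cases hKL : Disjoint K L
  · exact Or.inr (Or.inl (hKL.left_le_of_le_sup_left hKI))
  by_cases hKR : Disjoint K R
  · exact Or.inl (hKR.left_le_of_le_sup_right hKI)
  rcases τ.subset_or_subset_of_not_disjoint hK h.left_mem hKL with hKL' | hLK
  · exact Or.inl hKL'
  rcases τ.subset_or_subset_of_not_disjoint hK h.right_mem hKR with hKR' | hRK
  · exact absurd (hLK.trans hKR') fun hLR => h.symm.not_subset_left_of_right hLR
  · exact Or.inr (Or.inr (hKI.antisymm (union_subset hLK hRK)))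

lemma eq_left_of_subset {B : Finset J} (hB : B ∈ τ.clusters) (hLB : L ⊆ B) (hIB : ¬I ⊆ B) :
    B = L := by
  have hBI : ¬Disjoint B I :=
    not_disjoint_iff_nonempty_inter.mpr (h.left_nonempty.mono (subset_inter hLB h.left_subset))
  rcases τ.subset_or_subset_of_not_disjoint hB h.mem hBI with hBI | hIB'
  · rcases h.subset_or_subset_or_eq hB hBI with hBL | hBR | rfl
    · exact hBL.antisymm hLB
    · exact absurd (hLB.trans hBR) h.symm.not_subset_left_of_right
    · exact absurd subset_rfl hIB
  · exact absurd hIB' hIB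

lemma parent_left : τ.parent L = I := by
  refine le_antisymm (Finset.inf_le (mem_filter.mpr ⟨h.mem, h.left_ssubset⟩))
    (Finset.le_inf fun K hK => ?_)
  obtain ⟨hK, hLK⟩ := mem_filter.mp hK
  exact by_contra fun hIK => hLK.ne (h.eq_left_of_subset hK hLK.subset hIK).symm

lemma left_ne_univ : L ≠ univ := fun hL => h.left_ssubset.not_subset (hL ▸ subset_univ I)

lemma one_lt_card : 1 < #I := by
  rw [← h.union_eq, card_union_of_disjoint h.disjoint]
  have := card_pos.mpr h.left_nonempty
  have := card_pos.mpr h.right_nonempty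
  omega

end Children

variable (τ) in
lemma exists_children_of_ssubset {K I : Finset J} (hK : K ∈ τ.clusters) (hI : I ∈ τ.clusters)
    (hKI : K ⊂ I) : ∃ L R, τ.Children I L R ∧ K ⊆ L := by
  have hcard : 1 < #I :=
    Nat.lt_of_le_of_lt (card_pos.mpr (τ.nonempty_of_mem K hK)) (card_lt_card hKI)
  obtain ⟨L, hL, R, hR, hd, hu⟩ := τ.binary_split I hI hcard
  have h : τ.Children I L R := ⟨hI, hL, hR, hd, hu⟩
  rcases h.subset_or_subset_or_eq hK hKI.subset with hKL | hKR | rfl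
  · exact ⟨L, R, h, hKL⟩
  · exact ⟨R, L, h.symm, hKR⟩
  · exact absurd hKI (ssubset_irrefl K)

section Interchange

variable {P A B G C : Finset J} (hP : τ.Children P A B) (hG : τ.Children G P C)
include hP hG

lemma subset_or_subset_or_disjoint_union_sibling {K : Finset J} (hK : K ∈ τ.clusters)
    (hKP : K ≠ P) : K ⊆ B ∪ C ∨ B ∪ C ⊆ K ∨ Disjoint K (B ∪ C) := by
  have hBC : B ∪ C ⊆ G := union_subset (hP.right_subset.trans hG.left_subset) hG.right_subset
  rcases τ.laminar K hK G hG.mem with hKG | hGK | hKG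
  · rcases hG.subset_or_subset_or_eq hK hKG with hKP' | hKC | rfl
    · rcases hP.subset_or_subset_or_eq hK hKP' with hKA | hKB | rfl
      · exact Or.inr (Or.inr (disjoint_union_right.mpr
          ⟨hP.disjoint.mono_left hKA, hG.disjoint.mono_left (hKA.trans hP.left_subset)⟩))
      · exact Or.inl (hKB.trans subset_union_left)
      · exact absurd rfl hKP
    · exact Or.inl (hKC.trans subset_union_right)
    · exact Or.inr (Or.inl hBC)
  · exact Or.inr (Or.inl (hBC.trans hGK))
  · exact Or.inr (Or.inr (hKG.mono_right hBC))

lemma disjoint_union_sibling : Disjoint A (B ∪ C) :=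
  disjoint_union_right.mpr ⟨hP.disjoint, hG.disjoint.mono_left hP.left_subset⟩

def interchange : BinaryHierarchy J where
  clusters := τ.clusters \ {P} ∪ {B ∪ C}
  root_mem := mem_union_left _
    (mem_sdiff.mpr ⟨τ.root_mem, fun h => hG.left_ne_univ (mem_singleton.mp h).symm⟩)
  singleton_mem j := by
    refine mem_union_left _ (mem_sdiff.mpr ⟨τ.singleton_mem j, fun h => ?_⟩)
    have := hP.one_lt_card
    rw [← mem_singleton.mp h, card_singleton] at this
    exact lt_irrefl _ this
  nonempty_of_mem I hI := by
    rcases mem_union.mp hI with hI | hI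
    · exact τ.nonempty_of_mem I (mem_sdiff.mp hI).1
    · exact mem_singleton.mp hI ▸ hP.right_nonempty.mono subset_union_left
  laminar I hI K hK := by
    simp only [mem_union, mem_sdiff, mem_singleton] at hI hK
    rcases hI with ⟨hI, hIP⟩ | rfl <;> rcases hK with ⟨hK, hKP⟩ | rfl
    · exact τ.laminar I hI K hK
    · exact subset_or_subset_or_disjoint_union_sibling hP hG hI hIP
    · rcases subset_or_subset_or_disjoint_union_sibling hP hG hK hKP with h | h | h
      exacts [Or.inr (Or.inl h), Or.inl h, Or.inr (Or.inr h.symm)]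
    · exact Or.inl subset_rfl
  binary_split I hI hcard := by
    simp only [mem_union, mem_sdiff, mem_singleton] at hI ⊢
    rcases hI with ⟨hI, hIP⟩ | rfl
    · by_cases hIG : I = G
      · subst hIG
        refine ⟨A, Or.inl ⟨hP.left_mem, hP.left_ssubset.ne⟩, B ∪ C, Or.inr rfl,
          disjoint_union_sibling hP hG, ?_⟩
        rw [← union_assoc, hP.union_eq, hG.union_eq]
      · obtain ⟨L, hL, R, hR, hd, hu⟩ := τ.binary_split I hI hcard
        have hc : τ.Children I L R := ⟨hI, hL, hR, hd, hu⟩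
        exact ⟨L, Or.inl ⟨hL, fun hLP => hIG (by rw [← hc.parent_left, hLP, hG.parent_left])⟩,
          R, Or.inl ⟨hR, fun hRP => hIG (by rw [← hc.symm.parent_left, hRP, hG.parent_left])⟩,
          hd, hu⟩
    · exact ⟨B, Or.inl ⟨hP.right_mem, hP.symm.left_ssubset.ne⟩, C,
        Or.inl ⟨hG.right_mem, fun h => hG.not_subset_left_of_right h.subset⟩,
        hG.disjoint.mono_left hP.right_subset, rfl⟩

lemma mem_interchange_clusters {K : Finset J} :
    K ∈ (interchange hP hG).clusters ↔ K ∈ τ.clusters ∧ K ≠ P ∨ K = B ∪ C := by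
  simp only [interchange, mem_union, mem_sdiff, mem_singleton]

lemma nniMove_interchange : NNIMove τ (interchange hP hG) := by
  refine ⟨A, hP.left_mem, hP.parent_left ▸ hG.left_ne_univ, ?_⟩
  rw [hP.parent_left, hP.sdiff_left, hP.union_eq, hG.parent_left, hG.sdiff_left]
  rfl

lemma nniGraph_adj_interchange : (nniGraph J).Adj τ (interchange hP hG) := by
  have hPmem : P ∉ (interchange hP hG).clusters := by
    rw [mem_interchange_clusters]
    rintro (⟨-, hne⟩ | hPBC)
    · exact hne rfl
    · exact hP.left_nonempty.ne_empty
        ((disjoint_union_sibling hP hG).eq_bot_of_le (hPBC ▸ hP.left_subset))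
  refine (SimpleGraph.fromRel_adj _ _ _).mpr ⟨fun h => hPmem ?_, Or.inl (nniMove_interchange hP hG)⟩
  rw [← h]
  exact hG.left_mem

end Interchange

end BinaryHierarchy

def AgreeWithin (S : Finset (Finset J)) (σ τ : BinaryHierarchy J) : Prop :=
  ∀ K, (∃ B ∈ S, K ⊆ B) → (K ∈ σ.clusters ↔ K ∈ τ.clusters)

namespace AgreeWithin

variable {S T : Finset (Finset J)} {σ τ υ : BinaryHierarchy J}

lemma refl (S : Finset (Finset J)) (σ : BinaryHierarchy J) : AgreeWithin S σ σ :=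
  fun _ _ => Iff.rfl

lemma symm (h : AgreeWithin S σ τ) : AgreeWithin S τ σ := fun K hK => (h K hK).symm

lemma trans (h : AgreeWithin S σ τ) (h' : AgreeWithin S τ υ) : AgreeWithin S σ υ :=
  fun K hK => (h K hK).trans (h' K hK)

lemma mono (h : AgreeWithin S σ τ) (hTS : T ⊆ S) : AgreeWithin T σ τ :=
  fun K ⟨B, hB, hKB⟩ => h K ⟨B, hTS hB, hKB⟩

lemma mem_iff {B : Finset J} (h : AgreeWithin S σ τ) (hB : B ∈ S) :
    B ∈ σ.clusters ↔ B ∈ τ.clusters :=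
  h B ⟨B, hB, subset_rfl⟩

lemma eq_of_univ_mem (h : AgreeWithin S σ τ) (hS : univ ∈ S) : σ = τ :=
  BinaryHierarchy.clusters_injective (Finset.ext fun K => h K ⟨univ, hS, subset_univ K⟩)

lemma insert_of_children {I B W : Finset J} (h : AgreeWithin S σ τ) (hB : B ∈ S) (hW : W ∈ S)
    (hσ : σ.Children I B W) (hτ : τ.Children I B W) : AgreeWithin (insert I S) σ τ := by
  have key : ∀ {σ τ : BinaryHierarchy J}, AgreeWithin S σ τ → σ.Children I B W →
      τ.Children I B W → ∀ K ∈ σ.clusters, K ⊆ I → K ∈ τ.clusters := by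
    intro σ τ h hσ hτ K hK hKI
    rcases hσ.subset_or_subset_or_eq hK hKI with hKB | hKW | rfl
    · exact (h K ⟨B, hB, hKB⟩).mp hK
    · exact (h K ⟨W, hW, hKW⟩).mp hK
    · exact hτ.mem
  rintro K ⟨Z, hZ, hKZ⟩
  rcases mem_insert.mp hZ with rfl | hZ
  · exact ⟨fun hK => key h hσ hτ K hK hKZ, fun hK => key h.symm hτ hσ K hK hKZ⟩
  · exact h K ⟨Z, hZ, hKZ⟩

end AgreeWithin

namespace BinaryHierarchy

open SimpleGraph

variable {τ : BinaryHierarchy J} {P : Finpartition (univ : Finset J)}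

lemma Children.exists_mem_parts_subset_left {I L R : Finset J} (h : τ.Children I L R)
    (hPτ : ∀ W ∈ P.parts, W ∈ τ.clusters) (hI : ∀ W ∈ P.parts, ¬I ⊆ W) :
    ∃ W ∈ P.parts, W ⊆ L := by
  obtain ⟨x, hx⟩ := h.left_nonempty
  obtain ⟨W, hW, hxW⟩ := P.exists_mem (mem_univ x)
  refine ⟨W, hW, ?_⟩
  rcases τ.laminar W (hPτ W hW) L h.left_mem with hWL | hLW | hd
  · exact hWL
  · exact (h.eq_left_of_subset (hPτ W hW) hLW (hI W hW)).le
  · exact absurd hx (disjoint_left.mp hd hxW)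

lemma exists_children_mem_parts (hPτ : ∀ W ∈ P.parts, W ∈ τ.clusters) (hP : 1 < #P.parts) :
    ∃ B ∈ P.parts, ∃ W ∈ P.parts, B ≠ W ∧ τ.Children (B ∪ W) B W := by
  have huniv : ∀ W ∈ P.parts, ¬univ ⊆ W := by
    intro W hW hW'
    obtain ⟨B, hB, B', hB', hne⟩ := one_lt_card.mp hP
    obtain ⟨x, hx⟩ := P.nonempty_of_mem_parts hB
    obtain ⟨y, hy⟩ := P.nonempty_of_mem_parts hB'
    exact hne ((P.eq_of_mem_parts hB hW hx (hW' (mem_univ x))).trans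
      (P.eq_of_mem_parts hB' hW hy (hW' (mem_univ y))).symm)
  obtain ⟨X, ⟨hXτ, hXP⟩, hXmin⟩ := exists_minimal_of_wellFoundedLT
    (fun K => K ∈ τ.clusters ∧ ∀ W ∈ P.parts, ¬K ⊆ W) ⟨univ, τ.root_mem, huniv⟩
  have hcard : 1 < #X := by
    rcases (τ.nonempty_of_mem X hXτ).exists_eq_singleton_or_nontrivial with ⟨j, rfl⟩ | hX
    · obtain ⟨W, hW, hjW⟩ := P.exists_mem (mem_univ j)
      exact absurd (singleton_subset_iff.mpr hjW) (hXP W hW)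
    · exact one_lt_card_iff_nontrivial.mpr hX
  obtain ⟨L, hL, R, hR, hd, hu⟩ := τ.binary_split X hXτ hcard
  have h : τ.Children X L R := ⟨hXτ, hL, hR, hd, hu⟩
  have hpart : ∀ {K K'}, τ.Children X K K' → ∃ B ∈ P.parts, B = K := by
    intro K K' hK
    obtain ⟨W, hW, hKW⟩ : ∃ W ∈ P.parts, K ⊆ W := by
      by_contra! hKW
      exact hK.left_ssubset.not_subset (hXmin ⟨hK.left_mem, hKW⟩ hK.left_subset)
    exact ⟨W, hW, hK.eq_left_of_subset (hPτ W hW) hKW (hXP W hW)⟩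
  obtain ⟨B, hB, rfl⟩ := hpart h
  obtain ⟨W, hW, rfl⟩ := hpart h.symm
  exact ⟨B, hB, W, hW, fun hBW => h.not_subset_left_of_right hBW.symm.subset, hu ▸ h⟩

lemma exists_children_separating {S T Q : Finset J} (hS : S ∈ τ.clusters) (hT : T ∈ τ.clusters)
    (hST : Disjoint S T) (hQ : Minimal (fun K => K ∈ τ.clusters ∧ S ∪ T ⊆ K) Q) :
    ∃ L R, τ.Children Q L R ∧ S ⊆ L ∧ T ⊆ R := by
  have hTQ : T ⊆ Q := subset_union_right.trans hQ.prop.2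
  have hSQ : S ⊂ Q := (subset_union_left.trans hQ.prop.2).ssubset_of_not_subset fun hQS =>
    (τ.nonempty_of_mem T hT).ne_empty (hST.symm.eq_bot_of_le (hTQ.trans hQS))
  obtain ⟨L, R, h, hSL⟩ := τ.exists_children_of_ssubset hS hQ.prop.1 hSQ
  rcases h.subset_or_subset_or_eq hT hTQ with hTL | hTR | rfl
  · exact absurd (hQ.le_of_le ⟨h.left_mem, union_subset hSL hTL⟩ h.left_subset)
      h.left_ssubset.not_subset
  · exact ⟨L, R, h, hSL, hTR⟩
  · exact absurd hSQ.subset fun hST' => (τ.nonempty_of_mem S hS).ne_empty (hST.eq_bot_of_le hST')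

lemma exists_adj_merge_step {σ : BinaryHierarchy J} (hPσ : ∀ W ∈ P.parts, W ∈ σ.clusters)
    {Q Qa Qb B : Finset J} (hQ : σ.Children Q Qa Qb) (hB : B ∈ P.parts) (hBQa : B ⊂ Qa) :
    ∃ σ₁ Q', (nniGraph J).Adj σ σ₁ ∧ AgreeWithin P.parts σ σ₁ ∧ Q' ∈ σ₁.clusters ∧
      B ∪ Qb ⊆ Q' ∧ #{W ∈ P.parts | W ⊆ Q'} < #{W ∈ P.parts | W ⊆ Q} := by
  obtain ⟨A₁, A₂, hA, hBA₁⟩ := σ.exists_children_of_ssubset (hPσ B hB) hQ.left_mem hBQa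
  have hQa : ∀ W ∈ P.parts, ¬Qa ⊆ W := fun W hW => P.not_le_of_lt hB hW hBQa
  have hnew : ∀ W ∈ P.parts, ¬A₁ ∪ Qb ⊆ W := fun W hW hW' => by
    have hBW : B = W :=
      P.disjoint.eq_of_le hB hW (P.ne_bot hB) (hBA₁.trans (subset_union_left.trans hW'))
    exact hQ.not_subset_left_of_right ((subset_union_right.trans hW').trans (hBW ▸ hBQa.subset))
  obtain ⟨W, hW, hWA₂⟩ := hA.symm.exists_mem_parts_subset_left hPσ hQa
  -- the move at `A₂` replaces `Qa = A₁ ∪ A₂` by `A₁ ∪ Qb`, which misses the part `W ⊆ A₂`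
  refine ⟨interchange hA.symm hQ, A₁ ∪ Qb, nniGraph_adj_interchange _ _, ?_,
    mem_interchange_clusters _ _ |>.mpr (Or.inr rfl), union_subset_union hBA₁ subset_rfl,
    card_lt_card ?_⟩
  · rintro K ⟨Z, hZ, hKZ⟩
    have hKQa : K ≠ Qa := fun h => hQa Z hZ (h ▸ hKZ)
    have hKnew : K ≠ A₁ ∪ Qb := fun h => hnew Z hZ (h ▸ hKZ)
    simp only [mem_interchange_clusters, hKQa, hKnew, ne_eq, not_false_eq_true, and_true,
      or_false]
  · have hsub : A₁ ∪ Qb ⊆ Q := union_subset (hA.left_subset.trans hQ.left_subset) hQ.right_subset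
    refine (ssubset_iff_of_subset (monotone_filter_right _ fun _ _ hZ => hZ.trans hsub)).mpr
      ⟨W, mem_filter.mpr ⟨hW, hWA₂.trans (hA.right_subset.trans hQ.left_subset)⟩, ?_⟩
    refine fun hW' => (P.nonempty_of_mem_parts hW).ne_empty ?_
    exact ((disjoint_union_sibling hA.symm hQ).mono_left hWA₂).eq_bot_of_le (mem_filter.mp hW').2

lemma exists_walk_merge {B₁ B₂ : Finset J} (hB₁ : B₁ ∈ P.parts) (hB₂ : B₂ ∈ P.parts)
    (hne : B₁ ≠ B₂) (t : ℕ) {σ : BinaryHierarchy J} (hPσ : ∀ W ∈ P.parts, W ∈ σ.clusters)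
    {Q : Finset J} (hQ : Q ∈ σ.clusters) (hBQ : B₁ ∪ B₂ ⊆ Q) (ht : #{W ∈ P.parts | W ⊆ Q} ≤ t) :
    ∃ σ' : BinaryHierarchy J, ∃ p : (nniGraph J).Walk σ σ', p.length ≤ t - 2 ∧
      B₁ ∪ B₂ ∈ σ'.clusters ∧ AgreeWithin P.parts σ σ' := by
  induction t generalizing σ Q with
  | zero =>
    have : 0 < #{W ∈ P.parts | W ⊆ Q} :=
      card_pos.mpr ⟨B₁, mem_filter.mpr ⟨hB₁, subset_union_left.trans hBQ⟩⟩
    omega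
  | succ t ih =>
    obtain ⟨Q₀, hQ₀Q, hQ₀⟩ := exists_minimal_le_of_wellFoundedLT
      (fun K => K ∈ σ.clusters ∧ B₁ ∪ B₂ ⊆ K) Q ⟨hQ, hBQ⟩
    obtain ⟨Qa, Qb, hQ₀c, h₁, h₂⟩ :=
      exists_children_separating (hPσ B₁ hB₁) (hPσ B₂ hB₂) (P.disjoint hB₁ hB₂ hne) hQ₀
    by_cases hdone : Qa = B₁ ∧ Qb = B₂
    · obtain ⟨rfl, rfl⟩ := hdone
      exact ⟨σ, .nil, Nat.zero_le _, hQ₀c.union_eq ▸ hQ₀c.mem, AgreeWithin.refl _ _⟩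
    obtain ⟨σ₁, Q', hadj, hagree, hQ', hBQ', hlt⟩ : ∃ σ₁ Q', (nniGraph J).Adj σ σ₁ ∧
        AgreeWithin P.parts σ σ₁ ∧ Q' ∈ σ₁.clusters ∧ B₁ ∪ B₂ ⊆ Q' ∧
        #{W ∈ P.parts | W ⊆ Q'} < #{W ∈ P.parts | W ⊆ Q₀} := by
      rcases not_and_or.mp hdone with hQa | hQb
      · obtain ⟨σ₁, Q', hadj, hagree, hQ', hBQ', hlt⟩ :=
          exists_adj_merge_step hPσ hQ₀c hB₁ (h₁.ssubset_of_ne (Ne.symm hQa))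
        exact ⟨σ₁, Q', hadj, hagree, hQ', (union_subset_union subset_rfl h₂).trans hBQ', hlt⟩
      · obtain ⟨σ₁, Q', hadj, hagree, hQ', hBQ', hlt⟩ :=
          exists_adj_merge_step hPσ hQ₀c.symm hB₂ (h₂.ssubset_of_ne (Ne.symm hQb))
        exact ⟨σ₁, Q', hadj, hagree, hQ',
          (union_subset (h₁.trans subset_union_right) subset_union_left).trans hBQ', hlt⟩
    have hQ₀t : #{W ∈ P.parts | W ⊆ Q₀} ≤ t + 1 :=
      (card_le_card (monotone_filter_right _ fun _ _ hW => hW.trans hQ₀Q)).trans ht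
    have htwo : 2 ≤ #{W ∈ P.parts | W ⊆ Q'} := by
      rw [← card_pair hne]
      refine card_le_card (insert_subset ?_ (singleton_subset_iff.mpr ?_))
      · exact mem_filter.mpr ⟨hB₁, subset_union_left.trans hBQ'⟩
      · exact mem_filter.mpr ⟨hB₂, subset_union_right.trans hBQ'⟩
    obtain ⟨σ', p, hp, hmem, hagree'⟩ :=
      ih (fun W hW => (hagree.mem_iff hW).mp (hPσ W hW)) hQ' hBQ' (by omega)
    exact ⟨σ', .cons hadj p, by rw [Walk.length_cons]; omega, hmem, hagree.trans hagree'⟩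

lemma exists_walk_of_agreeWithin (k : ℕ) {σ τ : BinaryHierarchy J} (hk : #P.parts = k + 1)
    (hPτ : ∀ W ∈ P.parts, W ∈ τ.clusters) (h : AgreeWithin P.parts σ τ) :
    ∃ p : (nniGraph J).Walk σ τ, p.length ≤ k * (k - 1) / 2 := by
  induction k generalizing σ P with
  | zero =>
    obtain ⟨X, hX⟩ := card_eq_one.mp hk
    have hXuniv : X = univ := by simpa [hX] using P.sup_parts
    obtain rfl := h.eq_of_univ_mem (hX ▸ hXuniv ▸ mem_singleton_self X)
    exact ⟨.nil, le_rfl⟩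
  | succ k ih =>
    obtain ⟨B, hB, W, hW, hne, hτ⟩ := exists_children_mem_parts hPτ (by omega)
    have hPσ : ∀ Z ∈ P.parts, Z ∈ σ.clusters := fun Z hZ => (h.mem_iff hZ).mpr (hPτ Z hZ)
    obtain ⟨σ₁, p₁, hp₁, hBW, h₁⟩ := exists_walk_merge hB hW hne #P.parts hPσ σ.root_mem
      (subset_univ _) (card_le_card (filter_subset _ _))
    have hσ₁ : σ₁.Children (B ∪ W) B W :=
      ⟨hBW, (h₁.mem_iff hB).mp (hPσ B hB), (h₁.mem_iff hW).mp (hPσ W hW), hτ.disjoint, rfl⟩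
    have hsub := P.mergeParts_parts_subset hB hW hne
    obtain ⟨p₂, hp₂⟩ := ih (P := P.mergeParts hB hW hne)
      (by rw [Finpartition.card_mergeParts]; omega)
      (fun Z hZ => (mem_insert.mp (hsub hZ)).elim (· ▸ hτ.mem) (hPτ Z))
      (((h₁.symm.trans h).insert_of_children hB hW hσ₁ hτ).mono hsub)
    refine ⟨p₁.append p₂, ?_⟩
    rw [Walk.length_append, Nat.triangle_succ]
    omega

lemma agreeWithin_bot (σ τ : BinaryHierarchy J) :
    AgreeWithin (⊥ : Finpartition (univ : Finset J)).parts σ τ := by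
  rintro K ⟨Z, hZ, hKZ⟩
  obtain ⟨j, -, rfl⟩ := Finpartition.mem_bot_iff.mp hZ
  rcases subset_singleton_iff.mp hKZ with rfl | rfl
  · exact iff_of_false (fun h => (σ.nonempty_of_mem _ h).ne_empty rfl)
      (fun h => (τ.nonempty_of_mem _ h).ne_empty rfl)
  · exact iff_of_true (σ.singleton_mem j) (τ.singleton_mem j)

lemma exists_walk_length_le (σ τ : BinaryHierarchy J) :
    ∃ p : (nniGraph J).Walk σ τ,
      p.length ≤ (Fintype.card J - 1) * (Fintype.card J - 2) / 2 := by
  obtain ⟨j, -⟩ := τ.nonempty_of_mem _ τ.root_mem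
  obtain ⟨k, hk⟩ := Nat.exists_eq_succ_of_ne_zero (Fintype.card_pos_iff.mpr ⟨j⟩).ne'
  obtain ⟨p, hp⟩ := exists_walk_of_agreeWithin k (P := ⊥)
    (by rw [Finpartition.card_bot, card_univ, hk])
    (fun W hW => by obtain ⟨i, -, rfl⟩ := Finpartition.mem_bot_iff.mp hW; exact τ.singleton_mem i)
    (agreeWithin_bot σ τ)
  exact ⟨p, by rw [hk]; simpa using hp⟩

end BinaryHierarchy

theorem nni_graph_connected_general (σ τ : BinaryHierarchy J) :
    ∃ (m : ℕ) (f : ℕ → BinaryHierarchy J),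
      m ≤ (Fintype.card J - 1) * (Fintype.card J - 2) / 2 ∧
      f 0 = σ ∧ f m = τ ∧ ∀ i < m, NNIAdjacent (f i) (f (i + 1)) := by
  obtain ⟨p, hp⟩ := BinaryHierarchy.exists_walk_length_le σ τ
  exact ⟨p.length, p.getVert, hp, p.getVert_zero, p.getVert_length,
    fun i hi => (p.adj_getVert_succ hi).2⟩

/-- any two binary hierarchies over an `n`-element index set (`n ≥ 2`)
are joined by a path of NNI moves of length at most `(n - 1)(n - 2)/2`; in particular
the NNI-graph is connected. -/
theorem nni_graph_connected (hn : 2 ≤ Fintype.card J) (σ τ : BinaryHierarchy J) :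
    ∃ (m : ℕ) (f : ℕ → BinaryHierarchy J),
      m ≤ (Fintype.card J - 1) * (Fintype.card J - 2) / 2 ∧
      f 0 = σ ∧ f m = τ ∧ ∀ i < m, NNIAdjacent (f i) (f (i + 1)) :=
  nni_graph_connected_general σ τ
end
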